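/- arXiv:2509.14039 — 2 statements merged into one kernel-verified Lean document; each statement's English description precedes it below -/
import Mathlib

section
/- Let Φ be symmetric positive definite with λ_min(Φ) = a > 0, Σ_ε symmetric positive semidefinite, and α ∈ (0, 1/‖Φ‖). Let Σ be the unique solution of the Lyapunov equation ΦΣ + ΣΦ = Σ_ε, and Σ^α = α Σ_{k=0}^∞ (I − αΦ)^k Σ_ε (I − αΦ)^k. Then ‖Σ^α − Σ‖ ≤ α ‖Φ‖² ‖Σ‖ / a. -/
open Matrix

noncomputable def vnorm {d : ℕ} (v : Fin d → ℝ) : ℝ := Real.sqrt (∑ i, v i ^ 2)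

noncomputable def opNorm {d : ℕ} (A : Matrix (Fin d) (Fin d) ℝ) : ℝ :=
  ‖Matrix.toEuclideanCLM (𝕜 := ℝ) A‖

/-!
Write `B = 1 - αΦ`. The Lyapunov equation turns into the Stein identity
`Σ - BΣB = αΣ_ε - α²ΦΣΦ`, and summing its conjugates by `B^k` telescopes to
`Σ^α - Σ = α² ∑ B^k ΦΣΦ B^k`. Since `aI ≤ Φ ≤ ‖Φ‖I` and `α‖Φ‖ ≤ 1`, the symmetric matrix `B`
satisfies `0 ≤ B ≤ (1 - αa)I`, so `‖B‖ ≤ 1 - αa`. The geometric bound on the series then gives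
`‖Σ^α - Σ‖ ≤ α²‖Φ‖²‖Σ‖ / (1 - ‖B‖²)`, and `1 - ‖B‖² ≥ 1 - ‖B‖ ≥ αa`.
-/

open scoped RealInnerProductSpace

section SteinSum

variable {R : Type*} [NormedRing R]

/-- For `‖B‖ < 1` this is the solution `S` of the Stein equation `S - B * S * B = X`. -/
noncomputable def steinSum (B X : R) : R := ∑' k : ℕ, B ^ k * X * B ^ k

theorem norm_pow_mul_mul_pow_le (B X : R) (k : ℕ) :
    ‖B ^ k * X * B ^ k‖ ≤ ‖X‖ * (‖B‖ ^ 2) ^ k := by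
  rcases Nat.eq_zero_or_pos k with rfl | hk
  · simp
  calc ‖B ^ k * X * B ^ k‖ ≤ ‖B ^ k‖ * ‖X‖ * ‖B ^ k‖ := norm_mul₃_le
    _ ≤ ‖B‖ ^ k * ‖X‖ * ‖B‖ ^ k := by gcongr <;> exact norm_pow_le' B hk
    _ = ‖X‖ * (‖B‖ ^ 2) ^ k := by ring

variable {B : R}

theorem norm_steinSum_le (hB : ‖B‖ < 1) (X : R) :
    ‖steinSum B X‖ ≤ ‖X‖ / (1 - ‖B‖ ^ 2) :=
  tsum_of_norm_bounded ((hasSum_geometric_of_lt_one (by positivity)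
    (pow_lt_one₀ (norm_nonneg B) hB two_ne_zero)).mul_left ‖X‖)
    (norm_pow_mul_mul_pow_le B X)

variable [CompleteSpace R]

theorem summable_pow_mul_mul_pow (hB : ‖B‖ < 1) (X : R) :
    Summable fun k : ℕ ↦ B ^ k * X * B ^ k :=
  .of_norm_bounded ((summable_geometric_of_lt_one (by positivity)
    (pow_lt_one₀ (norm_nonneg B) hB two_ne_zero)).mul_left ‖X‖)
    (norm_pow_mul_mul_pow_le B X)

theorem steinSum_sub_mul_mul (hB : ‖B‖ < 1) (X : R) : steinSum B (X - B * X * B) = X := by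
  set f : ℕ → R := fun k ↦ B ^ k * X * B ^ k
  have hf : Summable f := summable_pow_mul_mul_pow hB X
  have htelescope (k : ℕ) : B ^ k * (X - B * X * B) * B ^ k = f k - f (k + 1) := by
    simp only [f, pow_succ]
    nth_rewrite 2 [pow_mul_comm']
    noncomm_ring
  simp_rw [steinSum, htelescope]
  rw [hf.tsum_sub ((summable_nat_add_iff 1).mpr hf), hf.tsum_eq_zero_add]
  simp [f]

end SteinSum

theorem sub_one_sub_smul_mul_mul_one_sub_smul {𝕜 R : Type*} [CommRing 𝕜] [Ring R]
    [Algebra 𝕜 R] (t : 𝕜) (Φ S : R) :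
    S - (1 - t • Φ) * S * (1 - t • Φ) = t • (Φ * S + S * Φ) - t ^ 2 • (Φ * S * Φ) := by
  simp only [sub_mul, mul_sub, one_mul, mul_one, smul_mul_assoc, mul_smul_comm, smul_sub,
    smul_add, smul_smul, sq]
  abel

section Lyapunov

variable {R : Type*} [NormedRing R] [NormedAlgebra ℝ R] [CompleteSpace R] {Φ : R} {t : ℝ}

theorem smul_steinSum_sub_eq (hB : ‖1 - t • Φ‖ < 1) (S : R) :
    t • steinSum (1 - t • Φ) (Φ * S + S * Φ) - S = t ^ 2 • steinSum (1 - t • Φ) (Φ * S * Φ) := by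
  set B := 1 - t • Φ
  have hterm (k : ℕ) : B ^ k * (S - B * S * B) * B ^ k
      = t • (B ^ k * (Φ * S + S * Φ) * B ^ k) - t ^ 2 • (B ^ k * (Φ * S * Φ) * B ^ k) := by
    rw [sub_one_sub_smul_mul_mul_one_sub_smul]
    simp only [mul_sub, sub_mul, mul_smul_comm, smul_mul_assoc]
  have hS := steinSum_sub_mul_mul hB S
  simp_rw [steinSum, hterm] at hS
  rw [((summable_pow_mul_mul_pow hB _).const_smul t).tsum_sub
    ((summable_pow_mul_mul_pow hB _).const_smul _),
    Summable.tsum_const_smul _ (summable_pow_mul_mul_pow hB _),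
    Summable.tsum_const_smul _ (summable_pow_mul_mul_pow hB _), sub_eq_iff_eq_add] at hS
  rw [steinSum, steinSum, hS, add_sub_cancel_left]

theorem norm_smul_steinSum_sub_le {a : ℝ} (ha : 0 < a) (ht : 0 < t)
    (hB : ‖1 - t • Φ‖ ≤ 1 - t * a) (S : R) :
    ‖t • steinSum (1 - t • Φ) (Φ * S + S * Φ) - S‖ ≤ t * ‖Φ‖ ^ 2 * ‖S‖ / a := by
  have hta : 0 < t * a := mul_pos ht ha
  have hB1 : ‖1 - t • Φ‖ < 1 := by linarith
  have hgap : t * a ≤ 1 - ‖1 - t • Φ‖ ^ 2 := by nlinarith [norm_nonneg (1 - t • Φ)]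
  rw [smul_steinSum_sub_eq hB1, norm_smul, Real.norm_of_nonneg (by positivity)]
  calc t ^ 2 * ‖steinSum (1 - t • Φ) (Φ * S * Φ)‖
      ≤ t ^ 2 * (‖Φ * S * Φ‖ / (1 - ‖1 - t • Φ‖ ^ 2)) := by
        gcongr; exact norm_steinSum_le hB1 _
    _ ≤ t ^ 2 * (‖Φ‖ * ‖S‖ * ‖Φ‖ / (t * a)) := by
        gcongr
        exact norm_mul₃_le
    _ = t * ‖Φ‖ ^ 2 * ‖S‖ / a := by field_simp

end Lyapunov

section SymmetricOperator

variable {E : Type*} [NormedAddCommGroup E] [InnerProductSpace ℝ E] {T : E →L[ℝ] E}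

theorem ContinuousLinearMap.norm_le_of_abs_inner_self_le (hT : (T : E →ₗ[ℝ] E).IsSymmetric)
    {c : ℝ} (hc : 0 ≤ c) (h : ∀ x, |⟪T x, x⟫| ≤ c * ‖x‖ ^ 2) : ‖T‖ ≤ c := by
  rw [T.norm_eq_iSup_rayleighQuotient hT]
  refine ciSup_le fun x ↦ ?_
  rcases eq_or_ne x 0 with rfl | hx
  · simpa using hc
  rw [rayleighQuotient, reApplyInnerSelf_apply, RCLike.re_to_real, abs_div, abs_sq,
    div_le_iff₀ (by positivity)]
  exact h x

theorem ContinuousLinearMap.norm_one_sub_smul_le [Nontrivial E]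
    (hT : (T : E →ₗ[ℝ] E).IsSymmetric) {a t : ℝ} (ha : ∀ x, a * ‖x‖ ^ 2 ≤ ⟪T x, x⟫)
    (ht : 0 ≤ t) (htT : t * ‖T‖ ≤ 1) :
    ‖1 - t • T‖ ≤ 1 - t * a := by
  have hle_norm (x : E) : ⟪T x, x⟫ ≤ ‖T‖ * ‖x‖ ^ 2 :=
    calc ⟪T x, x⟫ ≤ ‖T x‖ * ‖x‖ := real_inner_le_norm _ _
      _ ≤ ‖T‖ * ‖x‖ * ‖x‖ := by gcongr; exact T.le_opNorm x
      _ = ‖T‖ * ‖x‖ ^ 2 := by ring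
  have ha_le : a ≤ ‖T‖ := by
    obtain ⟨x, hx⟩ := exists_ne (0 : E)
    exact le_of_mul_le_mul_right ((ha x).trans (hle_norm x)) (by positivity)
  have hsymm : ((1 - t • T : E →L[ℝ] E) : E →ₗ[ℝ] E).IsSymmetric := by
    simpa using LinearMap.IsSymmetric.one.sub (hT.smul (conj_trivial t))
  refine norm_le_of_abs_inner_self_le hsymm (by nlinarith) fun x ↦ ?_
  have hx : ⟪(1 - t • T) x, x⟫ = ‖x‖ ^ 2 - t * ⟪T x, x⟫ := by
    simp [inner_sub_left, real_inner_smul_left]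
  rw [hx, abs_le]
  constructor <;> nlinarith [ha x, hle_norm x, sq_nonneg ‖x‖]

end SymmetricOperator

theorem EuclideanSpace.dotProduct_ofLp_self {n : Type*} [Fintype n] (x : EuclideanSpace ℝ n) :
    WithLp.ofLp x ⬝ᵥ WithLp.ofLp x = ‖x‖ ^ 2 := by
  rw [← real_inner_self_eq_norm_sq, EuclideanSpace.inner_eq_star_dotProduct, star_trivial]

open scoped Matrix.Norms.L2Operator in
theorem Matrix.norm_one_sub_smul_le {n : Type*} [Fintype n] [DecidableEq n] [Nonempty n]
    {Φ : Matrix n n ℝ} (hΦ : Φ.IsHermitian) {a t : ℝ}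
    (ha : ∀ u : n → ℝ, a * (u ⬝ᵥ u) ≤ u ⬝ᵥ Φ *ᵥ u) (ht : 0 ≤ t) (htΦ : t * ‖Φ‖ ≤ 1) :
    ‖1 - t • Φ‖ ≤ 1 - t * a := by
  rw [cstar_norm_def, map_sub, map_one, map_smul]
  refine (toEuclideanCLM (𝕜 := ℝ) Φ).norm_one_sub_smul_le
    (isSymmetric_toEuclideanLin_iff.mpr hΦ) (fun x ↦ ?_) ht htΦ
  rw [← EuclideanSpace.dotProduct_ofLp_self, real_inner_comm, inner_toEuclideanCLM]
  exact ha _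

theorem vnorm_sq {d : ℕ} (u : Fin d → ℝ) : vnorm u ^ 2 = u ⬝ᵥ u := by
  rw [vnorm, Real.sq_sqrt (by positivity), dotProduct]
  simp only [sq]

theorem stmt_5_general {d : ℕ} (a α : ℝ) (ha : 0 < a)
    (Φ Se S : Matrix (Fin d) (Fin d) ℝ)
    (hΦpd : Φ.PosDef)
    (hmin : ∀ u : Fin d → ℝ, a * vnorm u ^ 2 ≤ u ⬝ᵥ Φ.mulVec u)
    (hα : 0 < α) (hα' : α ≤ 1 / opNorm Φ)
    (hLyap : Φ * S + S * Φ = Se) :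
    opNorm
        ((α • ∑' k : ℕ, ((1 : Matrix (Fin d) (Fin d) ℝ) - α • Φ) ^ k * Se
            * ((1 : Matrix (Fin d) (Fin d) ℝ) - α • Φ) ^ k) - S)
      ≤ α * opNorm Φ ^ 2 * opNorm S / a := by
  rcases isEmpty_or_nonempty (Fin d) with hd | hd
  · have hzero (A : Matrix (Fin d) (Fin d) ℝ) : opNorm A = 0 := by
      rw [Subsingleton.elim A 0, opNorm, map_zero, norm_zero]
    simp [hzero]
  have hαΦ : α * opNorm Φ ≤ 1 := mul_le_of_le_div₀ zero_le_one (norm_nonneg _) hα'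
  open scoped Matrix.Norms.L2Operator in
  have hB : ‖1 - α • Φ‖ ≤ 1 - α * a :=
    Matrix.norm_one_sub_smul_le hΦpd.isHermitian (fun u ↦ vnorm_sq u ▸ hmin u) hα.le hαΦ
  rw [← hLyap]
  open scoped Matrix.Norms.L2Operator in
  exact norm_smul_steinSum_sub_le ha hα hB S

/-- If `Σ` solves the Lyapunov equation `ΦΣ + ΣΦ = Σ_ε` and
`Σ^α = α Σ_{k≥0} (I−αΦ)^k Σ_ε (I−αΦ)^k`, then `‖Σ^α − Σ‖ ≤ α‖Φ‖²‖Σ‖/a`. -/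
theorem stmt_5 {d : ℕ} (a α : ℝ) (ha : 0 < a)
    (Φ Se S : Matrix (Fin d) (Fin d) ℝ)
    (hΦpd : Φ.PosDef)
    (hmin : ∀ u : Fin d → ℝ, a * vnorm u ^ 2 ≤ u ⬝ᵥ Φ.mulVec u)
    (hSe : Se.PosSemidef)
    (hα : 0 < α) (hα' : α ≤ 1 / opNorm Φ)
    (hLyap : Φ * S + S * Φ = Se) :
    opNorm
        ((α • ∑' k : ℕ, ((1 : Matrix (Fin d) (Fin d) ℝ) - α • Φ) ^ k * Se
            * ((1 : Matrix (Fin d) (Fin d) ℝ) - α • Φ) ^ k) - S)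
      ≤ α * opNorm Φ ^ 2 * opNorm S / a :=
  stmt_5_general a α ha Φ Se S hΦpd hmin hα hα' hLyap
end

section
/- Let Γ_{1:n} = Π_{i=1}^n (I − αX_iX_iᵀ) and Γ'_{1:n} the same product with X_i replaced by an independent copy X_i' at a single index i, all X's i.i.d. with ‖X‖ ≤ c a.s. and E[XXᵀ] = Φ positive definite (λ_min = a), α ∈ (0, 1/c²]. Then Γ_{1:n} − Γ'_{1:n} = α Γ_{i+1:n}(X_i'X_i'ᵀ − X_iX_iᵀ)Γ_{1:i−1}, and consequently for any v ∈ ℝ^d, E[‖(Γ_{1:n} − Γ'_{1:n})v‖²]^{1/2} ≤ 2αc² (1 − αa/2)^{n−1}‖v‖. -/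
/-!
The identity holds because `Γ` and `Γ'` share every factor except the `i`-th one.

For the bound, the difference applied to `v` is `α Γ_{i+1:n} D Γ_{1:i-1} v` with
`‖D‖ ≤ 2c²`. Each factor `I − αX_jX_jᵀ` is a contraction (since `α‖X_j‖² ≤ 1`) and is
independent of the vector `W` it acts on, so
`E‖(I − αX_jX_jᵀ)W‖² ≤ E‖W‖² − α E[(X_j ⬝ W)²] = E‖W‖² − α E[Wᵀ Φ W] ≤ (1 − αa) E‖W‖²`.
Peeling off the `n − 1` factors around `D` gives
`E‖(Γ − Γ')v‖² ≤ (2αc²)² (1 − αa)^{n−1} ‖v‖²`; finally `√(1 − αa) ≤ 1 − αa/2`.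
-/

open MeasureTheory Matrix ProbabilityTheory

/-- The ordered product `Γ_{m:k} = (I − αX_kX_kᵀ)···(I − αX_mX_mᵀ)`, equal to `I` when
`m > k`. -/
noncomputable def prodGamma {d : ℕ} (α : ℝ) (Xs : ℕ → Fin d → ℝ) (m k : ℕ) :
    Matrix (Fin d) (Fin d) ℝ :=
  ((List.range (k + 1 - m)).map (fun j =>
      (1 : Matrix (Fin d) (Fin d) ℝ) - α • vecMulVec (Xs (k - j)) (Xs (k - j)))).prod

section vnorm

variable {d : ℕ}

lemma vnorm_eq_norm (v : Fin d → ℝ) : vnorm v = ‖WithLp.toLp 2 v‖ := by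
  simp [vnorm, EuclideanSpace.norm_eq]

lemma dotProduct_eq_inner (x y : Fin d → ℝ) :
    x ⬝ᵥ y = inner ℝ (WithLp.toLp 2 x) (WithLp.toLp 2 y) := by
  simp [EuclideanSpace.inner_toLp_toLp, dotProduct_comm]

lemma vnorm_nonneg (v : Fin d → ℝ) : 0 ≤ vnorm v := Real.sqrt_nonneg _

lemma vnorm_sq_le_sq {v : Fin d → ℝ} {c : ℝ} (h : vnorm v ≤ c) : vnorm v ^ 2 ≤ c ^ 2 :=
  pow_le_pow_left₀ (vnorm_nonneg v) h 2

lemma abs_apply_le_vnorm (v : Fin d → ℝ) (j : Fin d) : |v j| ≤ vnorm v := by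
  simpa [vnorm_eq_norm] using PiLp.norm_apply_le (WithLp.toLp 2 v) j

lemma abs_dotProduct_le (x y : Fin d → ℝ) : |x ⬝ᵥ y| ≤ vnorm x * vnorm y := by
  rw [dotProduct_eq_inner, vnorm_eq_norm, vnorm_eq_norm]
  exact abs_real_inner_le_norm _ _

lemma dotProduct_sq_le (x y : Fin d → ℝ) : (x ⬝ᵥ y) ^ 2 ≤ vnorm x ^ 2 * vnorm y ^ 2 := by
  rw [← mul_pow, ← sq_abs]
  exact pow_le_pow_left₀ (abs_nonneg _) (abs_dotProduct_le x y) 2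

lemma vnorm_add_le (x y : Fin d → ℝ) : vnorm (x + y) ≤ vnorm x + vnorm y := by
  simpa only [vnorm_eq_norm, WithLp.toLp_add] using norm_add_le _ _

lemma vnorm_smul (r : ℝ) (v : Fin d → ℝ) : vnorm (r • v) = |r| * vnorm v := by
  simp only [vnorm_eq_norm, WithLp.toLp_smul, norm_smul, Real.norm_eq_abs]

lemma vnorm_sub_smul_sq (x w : Fin d → ℝ) (t : ℝ) :
    vnorm (w - t • x) ^ 2 = vnorm w ^ 2 - 2 * t * (x ⬝ᵥ w) + t ^ 2 * vnorm x ^ 2 := by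
  simp only [vnorm_eq_norm, dotProduct_eq_inner, WithLp.toLp_sub, WithLp.toLp_smul,
    norm_sub_sq_real, norm_smul, inner_smul_right, real_inner_comm, Real.norm_eq_abs, mul_pow,
    sq_abs]
  ring

lemma abs_mul_apply_le_vnorm_sq (v : Fin d → ℝ) (j k : Fin d) : |v j * v k| ≤ vnorm v ^ 2 := by
  rw [abs_mul, sq]
  exact mul_le_mul (abs_apply_le_vnorm v j) (abs_apply_le_vnorm v k) (abs_nonneg _)
    (vnorm_nonneg v)

lemma continuous_vnorm : Continuous (vnorm (d := d)) := by
  simp only [funext vnorm_eq_norm]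
  fun_prop

lemma dotProduct_sq_eq_sum (x w : Fin d → ℝ) :
    (x ⬝ᵥ w) ^ 2 = ∑ j, ∑ k, (x j * x k) * (w j * w k) := by
  simp only [dotProduct, sq, Finset.sum_mul_sum]
  exact Finset.sum_congr rfl fun j _ => Finset.sum_congr rfl fun k _ => by ring

lemma dotProduct_mulVec_eq_sum (Φ : Matrix (Fin d) (Fin d) ℝ) (w : Fin d → ℝ) :
    w ⬝ᵥ Φ *ᵥ w = ∑ j, ∑ k, Φ j k * (w j * w k) := by
  simp only [dotProduct, mulVec, Finset.mul_sum]
  exact Finset.sum_congr rfl fun j _ => Finset.sum_congr rfl fun k _ => by ring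

lemma one_sub_smul_vecMulVec_mulVec (α : ℝ) (x w : Fin d → ℝ) :
    (1 - α • vecMulVec x x) *ᵥ w = w - (α * (x ⬝ᵥ w)) • x := by
  rw [sub_mulVec, one_mulVec, smul_mulVec, vecMulVec_mulVec, op_smul_eq_smul, smul_smul]

lemma vnorm_one_sub_smul_vecMulVec_mulVec_sq_le {α : ℝ} (hα : 0 ≤ α) {x : Fin d → ℝ}
    (hx : α * vnorm x ^ 2 ≤ 1) (w : Fin d → ℝ) :
    vnorm ((1 - α • vecMulVec x x) *ᵥ w) ^ 2 ≤ vnorm w ^ 2 - α * (x ⬝ᵥ w) ^ 2 := by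
  rw [one_sub_smul_vecMulVec_mulVec, vnorm_sub_smul_sq]
  have : 0 ≤ α * (x ⬝ᵥ w) ^ 2 := by positivity
  nlinarith

lemma vnorm_one_sub_smul_vecMulVec_mulVec_le {α : ℝ} (hα : 0 ≤ α) {x : Fin d → ℝ}
    (hx : α * vnorm x ^ 2 ≤ 1) (w : Fin d → ℝ) :
    vnorm ((1 - α • vecMulVec x x) *ᵥ w) ≤ vnorm w := by
  refine pow_le_pow_iff_left₀ (vnorm_nonneg _) (vnorm_nonneg _) two_ne_zero |>.mp ?_
  have := vnorm_one_sub_smul_vecMulVec_mulVec_sq_le hα hx w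
  nlinarith [mul_nonneg hα (sq_nonneg (x ⬝ᵥ w))]

lemma vnorm_vecMulVec_sub_vecMulVec_mulVec_le {x y : Fin d → ℝ} {c : ℝ} (hx : vnorm x ≤ c)
    (hy : vnorm y ≤ c) (w : Fin d → ℝ) :
    vnorm ((vecMulVec x x - vecMulVec y y) *ᵥ w) ≤ 2 * c ^ 2 * vnorm w := by
  rw [sub_mulVec, vecMulVec_mulVec, vecMulVec_mulVec, op_smul_eq_smul, op_smul_eq_smul,
    sub_eq_add_neg, ← neg_smul]
  refine (vnorm_add_le _ _).trans ?_
  rw [vnorm_smul, vnorm_smul, abs_neg]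
  have key (z : Fin d → ℝ) (hz : vnorm z ≤ c) : |z ⬝ᵥ w| * vnorm z ≤ c ^ 2 * vnorm w :=
    calc |z ⬝ᵥ w| * vnorm z ≤ vnorm z * vnorm w * vnorm z :=
          mul_le_mul_of_nonneg_right (abs_dotProduct_le z w) (vnorm_nonneg z)
      _ = vnorm z ^ 2 * vnorm w := by ring
      _ ≤ c ^ 2 * vnorm w := mul_le_mul_of_nonneg_right (vnorm_sq_le_sq hz) (vnorm_nonneg w)
  linarith [key x hx, key y hy]

end vnorm

section prodGamma

variable {d : ℕ} (α : ℝ) (Xs : ℕ → Fin d → ℝ)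

lemma prodGamma_of_lt {m k : ℕ} (h : k < m) : prodGamma α Xs m k = 1 := by
  simp [prodGamma, Nat.sub_eq_zero_of_le h]

lemma prodGamma_succ {m k : ℕ} (h : m ≤ k + 1) :
    prodGamma α Xs m (k + 1)
      = (1 - α • vecMulVec (Xs (k + 1)) (Xs (k + 1))) * prodGamma α Xs m k := by
  rw [prodGamma, show k + 1 + 1 - m = k + 1 - m + 1 by omega, List.range_succ_eq_map,
    List.map_cons, List.prod_cons, List.map_map]
  simp [prodGamma, Function.comp_def]

lemma prodGamma_congr {Ys : ℕ → Fin d → ℝ} {m k : ℕ} (h : ∀ j, m ≤ j → j ≤ k → Xs j = Ys j) :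
    prodGamma α Xs m k = prodGamma α Ys m k := by
  refine congrArg List.prod (List.map_congr_left fun j hj => ?_)
  rw [List.mem_range] at hj
  rw [h (k - j) (by omega) (by omega)]

lemma prodGamma_mul_prodGamma {m j k : ℕ} (hm : m ≤ j + 1) (hk : j ≤ k) :
    prodGamma α Xs (j + 1) k * prodGamma α Xs m j = prodGamma α Xs m k := by
  induction k, hk using Nat.le_induction with
  | base => rw [prodGamma_of_lt α Xs j.lt_succ_self, one_mul]
  | succ k hk ih =>
    rw [prodGamma_succ α Xs (by omega), prodGamma_succ α Xs (by omega), mul_assoc, ih]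

@[fun_prop]
lemma continuous_prodGamma (m k : ℕ) :
    Continuous fun x : ℕ → Fin d → ℝ => prodGamma α x m k :=
  continuous_list_prod _ fun j _ => by fun_prop

lemma prodGamma_sub_prodGamma_update {m i k : ℕ} (hm : m ≤ i + 1) (hk : i + 1 ≤ k)
    (x' : Fin d → ℝ) :
    prodGamma α Xs m k - prodGamma α (fun j => if j = i + 1 then x' else Xs j) m k
      = α • (prodGamma α Xs (i + 1 + 1) k * (vecMulVec x' x' - vecMulVec (Xs (i + 1)) (Xs (i + 1)))
          * prodGamma α Xs m i) := by
  set Ys := fun j => if j = i + 1 then x' else Xs j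
  have hlow : prodGamma α Ys m i = prodGamma α Xs m i :=
    prodGamma_congr α _ fun j _ hj => if_neg (by omega)
  have hhigh : prodGamma α Ys (i + 1 + 1) k = prodGamma α Xs (i + 1 + 1) k :=
    prodGamma_congr α _ fun j hj _ => if_neg (by omega)
  have hx' : Ys (i + 1) = x' := if_pos rfl
  rw [← prodGamma_mul_prodGamma α Xs (j := i + 1) (by omega) hk,
    ← prodGamma_mul_prodGamma α Ys (j := i + 1) (by omega) hk, prodGamma_succ α Xs hm,
    prodGamma_succ α Ys hm, hlow, hhigh, hx']
  simp only [mul_sub, sub_mul, one_mul, smul_sub, mul_smul_comm, smul_mul_assoc, mul_assoc]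
  abel

end prodGamma

lemma vnorm_prodGamma_mulVec_le {α : ℝ} (hα : 0 ≤ α) {Xs : ℕ → Fin d → ℝ}
    (hXs : ∀ j, α * vnorm (Xs j) ^ 2 ≤ 1) (m k : ℕ) (w : Fin d → ℝ) :
    vnorm (prodGamma α Xs m k *ᵥ w) ≤ vnorm w := by
  induction k with
  | zero =>
    rcases m with _ | m
    · simpa [prodGamma] using vnorm_one_sub_smul_vecMulVec_mulVec_le hα (hXs 0) w
    · rw [prodGamma_of_lt α Xs m.succ_pos, one_mulVec]
  | succ k ih =>
    rcases lt_or_ge (k + 1) m with h | h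
    · rw [prodGamma_of_lt α Xs h, one_mulVec]
    · rw [prodGamma_succ α Xs h, ← mulVec_mulVec]
      exact (vnorm_one_sub_smul_vecMulVec_mulVec_le hα (hXs _) _).trans ih

lemma ProbabilityTheory.iIndepFun.indepFun_of_dependsOn {ι Ω E F : Type*} [MeasurableSpace Ω]
    {μ : Measure Ω} [MeasurableSpace E] [MeasurableSpace F] [Inhabited E] {X : ι → Ω → E}
    (hX : iIndepFun X μ) (hXm : ∀ i, Measurable (X i)) {G : (ι → E) → F} (hG : Measurable G)
    {s : Finset ι} (hGs : DependsOn G s) {k : ι} (hk : k ∉ s) :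
    IndepFun (X k) (fun ω => G fun j => X j ω) μ := by
  classical
  let extend : (s → E) → ι → E := fun y j => if h : j ∈ s then y ⟨j, h⟩ else default
  have hextend : Measurable extend := measurable_pi_lambda _ fun j => by
    by_cases h : j ∈ s
    · simpa [extend, h] using measurable_pi_apply _
    · simp [extend, h]
  have hfactor : (fun ω => G fun j => X j ω) = (G ∘ extend) ∘ fun ω (j : s) => X j ω :=
    funext fun ω => hGs fun j hj => by simp [extend, Finset.mem_coe.mp hj]
  rw [hfactor]
  exact (hX.indepFun_finset {k} s (Finset.disjoint_singleton_left.2 hk) hXm).comp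
    (measurable_pi_apply ⟨k, Finset.mem_singleton_self k⟩) (hG.comp hextend)

section Expectation

variable {Ω : Type*} [MeasurableSpace Ω] {μ : Measure Ω} [IsProbabilityMeasure μ] {d : ℕ}

lemma integrable_vnorm_sq {W : Ω → Fin d → ℝ} (hWm : Measurable W) {B : ℝ}
    (hW : ∀ᵐ ω ∂μ, vnorm (W ω) ≤ B) : Integrable (fun ω => vnorm (W ω) ^ 2) μ :=
  .of_bound ((continuous_vnorm.measurable.comp hWm).pow_const 2).aestronglyMeasurable (B ^ 2) <| by
    filter_upwards [hW] with ω h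
    rw [Real.norm_eq_abs, abs_of_nonneg (sq_nonneg _)]
    exact vnorm_sq_le_sq h

lemma mul_integral_vnorm_sq_le_integral_dotProduct_sq {Y W : Ω → Fin d → ℝ}
    (hYm : Measurable Y) (hWm : Measurable W) (hind : IndepFun Y W μ) {c B : ℝ}
    (hY : ∀ᵐ ω ∂μ, vnorm (Y ω) ≤ c) (hW : ∀ᵐ ω ∂μ, vnorm (W ω) ≤ B)
    {Φ : Matrix (Fin d) (Fin d) ℝ} (hΦ : ∀ j k, ∫ ω, Y ω j * Y ω k ∂μ = Φ j k)
    {a : ℝ} (hmin : ∀ u : Fin d → ℝ, a * vnorm u ^ 2 ≤ u ⬝ᵥ Φ *ᵥ u) :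
    a * ∫ ω, vnorm (W ω) ^ 2 ∂μ ≤ ∫ ω, (Y ω ⬝ᵥ W ω) ^ 2 ∂μ := by
  have hcoord (Z : Ω → Fin d → ℝ) (hZ : Measurable Z) (j k : Fin d) :
      Measurable fun ω => Z ω j * Z ω k := by fun_prop
  have hWW (j k : Fin d) : Integrable (fun ω => W ω j * W ω k) μ :=
    .of_bound (hcoord W hWm j k).aestronglyMeasurable (B ^ 2) <| by
      filter_upwards [hW] with ω h
      exact (abs_mul_apply_le_vnorm_sq _ j k).trans (vnorm_sq_le_sq h)
  have hYW (j k : Fin d) : Integrable (fun ω => (Y ω j * Y ω k) * (W ω j * W ω k)) μ :=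
    .of_bound ((hcoord Y hYm j k).mul (hcoord W hWm j k)).aestronglyMeasurable (c ^ 2 * B ^ 2) <| by
      filter_upwards [hY, hW] with ω hy hw
      rw [Real.norm_eq_abs, abs_mul]
      exact mul_le_mul ((abs_mul_apply_le_vnorm_sq _ j k).trans (vnorm_sq_le_sq hy))
        ((abs_mul_apply_le_vnorm_sq _ j k).trans (vnorm_sq_le_sq hw)) (abs_nonneg _)
        (sq_nonneg c)
  have hsplit (j k : Fin d) :
      ∫ ω, (Y ω j * Y ω k) * (W ω j * W ω k) ∂μ = Φ j k * ∫ ω, W ω j * W ω k ∂μ := by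
    have hm : Measurable fun v : Fin d → ℝ => v j * v k := by fun_prop
    rw [← hΦ]
    exact (hind.comp hm hm).integral_fun_mul_eq_mul_integral
      (hcoord Y hYm j k).aestronglyMeasurable (hcoord W hWm j k).aestronglyMeasurable
  have hswap (f : Fin d → Fin d → Ω → ℝ) (hf : ∀ j k, Integrable (f j k) μ) :
      ∫ ω, ∑ j, ∑ k, f j k ω ∂μ = ∑ j, ∑ k, ∫ ω, f j k ω ∂μ := by
    rw [integral_finsetSum _ fun j _ => integrable_finsetSum _ fun k _ => hf j k]
    exact Finset.sum_congr rfl fun j _ => integral_finsetSum _ fun k _ => hf j k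
  have hW2 := integrable_vnorm_sq hWm hW
  have hquad : Integrable (fun ω => W ω ⬝ᵥ Φ *ᵥ W ω) μ := by
    simp only [dotProduct_mulVec_eq_sum]
    exact integrable_finsetSum _ fun j _ => integrable_finsetSum _ fun k _ =>
      (hWW j k).const_mul _
  calc a * ∫ ω, vnorm (W ω) ^ 2 ∂μ = ∫ ω, a * vnorm (W ω) ^ 2 ∂μ := (integral_const_mul _ _).symm
    _ ≤ ∫ ω, W ω ⬝ᵥ Φ *ᵥ W ω ∂μ := integral_mono (hW2.const_mul a) hquad fun ω => hmin (W ω)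
    _ = ∑ j, ∑ k, Φ j k * ∫ ω, W ω j * W ω k ∂μ := by
      simp only [dotProduct_mulVec_eq_sum, ← integral_const_mul]
      exact hswap (fun j k ω => Φ j k * (W ω j * W ω k)) fun j k => (hWW j k).const_mul _
    _ = ∫ ω, (Y ω ⬝ᵥ W ω) ^ 2 ∂μ := by
      simp only [dotProduct_sq_eq_sum, ← hsplit]
      exact (hswap (fun j k ω => (Y ω j * Y ω k) * (W ω j * W ω k)) hYW).symm

lemma integral_vnorm_one_sub_smul_vecMulVec_mulVec_sq_le {Y W : Ω → Fin d → ℝ}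
    (hYm : Measurable Y) (hWm : Measurable W) (hind : IndepFun Y W μ) {α c B : ℝ}
    (hα : 0 ≤ α) (hαc : α * c ^ 2 ≤ 1)
    (hY : ∀ᵐ ω ∂μ, vnorm (Y ω) ≤ c) (hW : ∀ᵐ ω ∂μ, vnorm (W ω) ≤ B)
    {Φ : Matrix (Fin d) (Fin d) ℝ} (hΦ : ∀ j k, ∫ ω, Y ω j * Y ω k ∂μ = Φ j k)
    {a : ℝ} (hmin : ∀ u : Fin d → ℝ, a * vnorm u ^ 2 ≤ u ⬝ᵥ Φ *ᵥ u) :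
    ∫ ω, vnorm ((1 - α • vecMulVec (Y ω) (Y ω)) *ᵥ W ω) ^ 2 ∂μ
      ≤ (1 - α * a) * ∫ ω, vnorm (W ω) ^ 2 ∂μ := by
  have hW2 := integrable_vnorm_sq hWm hW
  have hYW : Integrable (fun ω => (Y ω ⬝ᵥ W ω) ^ 2) μ :=
    .of_bound (by fun_prop) (c ^ 2 * B ^ 2) <| by
      filter_upwards [hY, hW] with ω hy hw
      rw [Real.norm_eq_abs, abs_of_nonneg (sq_nonneg _)]
      exact (dotProduct_sq_le _ _).trans
        (mul_le_mul (vnorm_sq_le_sq hy) (vnorm_sq_le_sq hw) (sq_nonneg _) (sq_nonneg _))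
  calc ∫ ω, vnorm ((1 - α • vecMulVec (Y ω) (Y ω)) *ᵥ W ω) ^ 2 ∂μ
      ≤ ∫ ω, vnorm (W ω) ^ 2 - α * (Y ω ⬝ᵥ W ω) ^ 2 ∂μ := by
        refine integral_mono_of_nonneg (.of_forall fun ω => sq_nonneg _)
          (hW2.sub (hYW.const_mul α)) ?_
        filter_upwards [hY] with ω h
        exact vnorm_one_sub_smul_vecMulVec_mulVec_sq_le hα
          ((mul_le_mul_of_nonneg_left (vnorm_sq_le_sq h) hα).trans hαc) _
    _ = ∫ ω, vnorm (W ω) ^ 2 ∂μ - α * ∫ ω, (Y ω ⬝ᵥ W ω) ^ 2 ∂μ := by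
        rw [integral_sub hW2 (hYW.const_mul α), integral_const_mul]
    _ ≤ ∫ ω, vnorm (W ω) ^ 2 ∂μ - α * (a * ∫ ω, vnorm (W ω) ^ 2 ∂μ) := by
        gcongr
        exact mul_integral_vnorm_sq_le_integral_dotProduct_sq hYm hWm hind hY hW hΦ hmin
    _ = (1 - α * a) * ∫ ω, vnorm (W ω) ^ 2 ∂μ := by ring

lemma le_sq_of_ae_vnorm_le [NeZero d] {Y : Ω → Fin d → ℝ} {c : ℝ}
    (hY : ∀ᵐ ω ∂μ, vnorm (Y ω) ≤ c) {Φ : Matrix (Fin d) (Fin d) ℝ}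
    (hΦ : ∀ j k, ∫ ω, Y ω j * Y ω k ∂μ = Φ j k) {a : ℝ}
    (hmin : ∀ u : Fin d → ℝ, a * vnorm u ^ 2 ≤ u ⬝ᵥ Φ *ᵥ u) : a ≤ c ^ 2 := by
  have h0 : vnorm (Pi.single (0 : Fin d) (1 : ℝ)) = 1 := by
    simp [vnorm, Pi.single_apply]
  have hΦ0 : Pi.single (0 : Fin d) (1 : ℝ) ⬝ᵥ Φ *ᵥ Pi.single 0 1 = Φ 0 0 := by
    simp [mulVec_single, single_dotProduct]
  have hΦc : Φ 0 0 ≤ c ^ 2 :=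
    calc Φ 0 0 = ∫ ω, Y ω 0 * Y ω 0 ∂μ := (hΦ 0 0).symm
      _ ≤ ∫ _, c ^ 2 ∂μ := by
        refine integral_mono_of_nonneg (.of_forall fun ω => mul_self_nonneg _)
          (integrable_const _) ?_
        filter_upwards [hY] with ω h
        exact (le_abs_self _).trans ((abs_mul_apply_le_vnorm_sq _ 0 0).trans (vnorm_sq_le_sq h))
      _ = c ^ 2 := by simp
  have := hmin (Pi.single 0 1)
  rw [h0, hΦ0] at this
  linarith

end Expectation

section Chain

variable {Ω : Type*} [MeasurableSpace Ω] {μ : Measure Ω} {d : ℕ}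
  {X : ℕ → Ω → Fin d → ℝ} {α c a : ℝ} {Φ : Matrix (Fin d) (Fin d) ℝ}

lemma ae_vnorm_prodGamma_mulVec_le (hα : 0 ≤ α) (hαc : α * c ^ 2 ≤ 1)
    (hXc : ∀ k, ∀ᵐ ω ∂μ, vnorm (X k ω) ≤ c) :
    ∀ᵐ ω ∂μ, ∀ m k w, vnorm (prodGamma α (fun j => X j ω) m k *ᵥ w) ≤ vnorm w := by
  filter_upwards [ae_all_iff.2 hXc] with ω hω m k w
  exact vnorm_prodGamma_mulVec_le hα
    (fun j => (mul_le_mul_of_nonneg_left (vnorm_sq_le_sq (hω j)) hα).trans hαc) m k w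

/-- Since `G` only reads coordinates outside `[m, k]`, each factor of `Γ_{m:k}` is independent
of the vector it multiplies and contracts `E‖·‖²` by `1 - αa`. -/
theorem integral_vnorm_prodGamma_mulVec_sq_le [IsProbabilityMeasure μ] (hα : 0 ≤ α)
    (hαc : α * c ^ 2 ≤ 1) (hαa : α * a ≤ 1) (hmin : ∀ u : Fin d → ℝ, a * vnorm u ^ 2 ≤ u ⬝ᵥ Φ *ᵥ u)
    (hXm : ∀ k, Measurable (X k)) (hindep : iIndepFun X μ)
    (hXΦ : ∀ k i j, ∫ ω, X k ω i * X k ω j ∂μ = Φ i j) (hXc : ∀ k, ∀ᵐ ω ∂μ, vnorm (X k ω) ≤ c)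
    {G : (ℕ → Fin d → ℝ) → Fin d → ℝ} (hG : Continuous G) {s : Finset ℕ} (hGs : DependsOn G s)
    {B : ℝ} (hGB : ∀ᵐ ω ∂μ, vnorm (G fun j => X j ω) ≤ B) {m : ℕ} (hm : 1 ≤ m) (k : ℕ)
    (hsk : ∀ j ∈ s, j < m ∨ k < j) :
    ∫ ω, vnorm (prodGamma α (fun j => X j ω) m k *ᵥ G fun j => X j ω) ^ 2 ∂μ
      ≤ (1 - α * a) ^ (k + 1 - m) * ∫ ω, vnorm (G fun j => X j ω) ^ 2 ∂μ := by
  have hX : Measurable fun ω j => X j ω := measurable_pi_lambda _ hXm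
  induction k with
  | zero => simp [prodGamma_of_lt _ _ hm, Nat.sub_eq_zero_of_le hm]
  | succ k ih =>
    rcases lt_or_ge (k + 1) m with hkm | hkm
    · simp [prodGamma_of_lt _ _ hkm, Nat.sub_eq_zero_of_le hkm]
    set G' := fun x => prodGamma α x m k *ᵥ G x
    have hG' : Continuous G' := (continuous_prodGamma α m k).matrix_mulVec hG
    have hG's : DependsOn G' ↑(s ∪ Finset.Icc m k) := fun x y hxy => by
      have hGxy : G x = G y := hGs fun j hj => hxy j (by simp [Finset.mem_coe.mp hj])
      have hΓ : prodGamma α x m k = prodGamma α y m k :=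
        prodGamma_congr α x fun j h1 h2 => hxy j (by simp [h1, h2])
      simp only [G', hGxy, hΓ]
    have hk : k + 1 ∉ s ∪ Finset.Icc m k := by
      rw [Finset.mem_union, Finset.mem_Icc]
      rintro (h | h)
      · have := hsk _ h
        omega
      · omega
    have hG'B : ∀ᵐ ω ∂μ, vnorm (G' fun j => X j ω) ≤ B := by
      filter_upwards [hGB, ae_vnorm_prodGamma_mulVec_le hα hαc hXc] with ω hGω hΓ
      exact (hΓ m k _).trans hGω
    calc ∫ ω, vnorm (prodGamma α (fun j => X j ω) m (k + 1) *ᵥ G fun j => X j ω) ^ 2 ∂μ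
        = ∫ ω, vnorm ((1 - α • vecMulVec (X (k + 1) ω) (X (k + 1) ω)) *ᵥ
            G' fun j => X j ω) ^ 2 ∂μ := by
          simp only [prodGamma_succ _ _ hkm, ← mulVec_mulVec, G']
      _ ≤ (1 - α * a) * ∫ ω, vnorm (G' fun j => X j ω) ^ 2 ∂μ :=
          integral_vnorm_one_sub_smul_vecMulVec_mulVec_sq_le (hXm _) (hG'.measurable.comp hX)
            (hindep.indepFun_of_dependsOn hXm hG'.measurable hG's hk) hα hαc (hXc _) hG'B
            (hXΦ _) hmin
      _ ≤ (1 - α * a) * ((1 - α * a) ^ (k + 1 - m) * ∫ ω, vnorm (G fun j => X j ω) ^ 2 ∂μ) :=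
          mul_le_mul_of_nonneg_left (ih fun j hj => (hsk j hj).imp_right fun h => by omega)
            (by linarith)
      _ = (1 - α * a) ^ (k + 1 + 1 - m) * ∫ ω, vnorm (G fun j => X j ω) ^ 2 ∂μ := by
          rw [← mul_assoc, ← pow_succ', show k + 1 - m + 1 = k + 1 + 1 - m by omega]

lemma integral_vnorm_vecMulVec_sub_vecMulVec_mulVec_prodGamma_sq_le [IsProbabilityMeasure μ]
    (hα : 0 ≤ α) (hαc : α * c ^ 2 ≤ 1) (hαa : α * a ≤ 1)
    (hmin : ∀ u : Fin d → ℝ, a * vnorm u ^ 2 ≤ u ⬝ᵥ Φ *ᵥ u)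
    (hXm : ∀ k, Measurable (X k)) (hindep : iIndepFun X μ)
    (hXΦ : ∀ k i j, ∫ ω, X k ω i * X k ω j ∂μ = Φ i j) (hXc : ∀ k, ∀ᵐ ω ∂μ, vnorm (X k ω) ≤ c)
    (p q i : ℕ) (v : Fin d → ℝ) :
    ∫ ω, vnorm ((vecMulVec (X p ω) (X p ω) - vecMulVec (X q ω) (X q ω)) *ᵥ
        (prodGamma α (fun j => X j ω) 1 i *ᵥ v)) ^ 2 ∂μ
      ≤ (2 * c ^ 2) ^ 2 * ((1 - α * a) ^ i * vnorm v ^ 2) := by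
  have hΓ := ae_vnorm_prodGamma_mulVec_le hα hαc hXc
  have hΓv : ∫ ω, vnorm (prodGamma α (fun j => X j ω) 1 i *ᵥ v) ^ 2 ∂μ
      ≤ (1 - α * a) ^ i * vnorm v ^ 2 := by
    simpa using integral_vnorm_prodGamma_mulVec_sq_le hα hαc hαa hmin hXm hindep hXΦ hXc
      continuous_const (s := ∅) (fun _ _ _ => rfl) (.of_forall fun _ => le_rfl) le_rfl i
      (by simp)
  have hint : Integrable (fun ω => vnorm (prodGamma α (fun j => X j ω) 1 i *ᵥ v) ^ 2) μ :=
    integrable_vnorm_sq ((by fun_prop : Continuous fun x => prodGamma α x 1 i *ᵥ v).measurable.comp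
      (measurable_pi_lambda _ hXm)) (hΓ.mono fun ω h => h 1 i v)
  calc _ ≤ ∫ ω, (2 * c ^ 2) ^ 2 * vnorm (prodGamma α (fun j => X j ω) 1 i *ᵥ v) ^ 2 ∂μ := by
        refine integral_mono_of_nonneg (.of_forall fun _ => sq_nonneg _) (hint.const_mul _) ?_
        filter_upwards [hXc p, hXc q] with ω hp hq
        rw [← mul_pow]
        exact pow_le_pow_left₀ (vnorm_nonneg _) (vnorm_vecMulVec_sub_vecMulVec_mulVec_le hp hq _) 2
    _ ≤ (2 * c ^ 2) ^ 2 * ((1 - α * a) ^ i * vnorm v ^ 2) := by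
        rw [integral_const_mul]
        gcongr

theorem integral_vnorm_prodGamma_sub_prodGamma_update_mulVec_sq_le [IsProbabilityMeasure μ]
    (hα : 0 ≤ α) (hαc : α * c ^ 2 ≤ 1) (hαa : α * a ≤ 1)
    (hmin : ∀ u : Fin d → ℝ, a * vnorm u ^ 2 ≤ u ⬝ᵥ Φ *ᵥ u)
    (hXm : ∀ k, Measurable (X k)) (hindep : iIndepFun X μ)
    (hXΦ : ∀ k i j, ∫ ω, X k ω i * X k ω j ∂μ = Φ i j) (hXc : ∀ k, ∀ᵐ ω ∂μ, vnorm (X k ω) ≤ c)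
    {n i : ℕ} (hi : 1 ≤ i) (hin : i ≤ n) (v : Fin d → ℝ) :
    ∫ ω, vnorm ((prodGamma α (fun j => X j ω) 1 n
        - prodGamma α (fun j => if j = i then X (n + 1) ω else X j ω) 1 n) *ᵥ v) ^ 2 ∂μ
      ≤ (2 * α * c ^ 2) ^ 2 * (1 - α * a) ^ (n - 1) * vnorm v ^ 2 := by
  obtain ⟨i, rfl⟩ : ∃ i', i = i' + 1 := ⟨i - 1, by omega⟩
  set D := fun x : ℕ → Fin d → ℝ => (vecMulVec (x (n + 1)) (x (n + 1))
    - vecMulVec (x (i + 1)) (x (i + 1))) *ᵥ (prodGamma α x 1 i *ᵥ v)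
  have hdiff (ω : Ω) : (prodGamma α (fun j => X j ω) 1 n
      - prodGamma α (fun j => if j = i + 1 then X (n + 1) ω else X j ω) 1 n) *ᵥ v
      = α • (prodGamma α (fun j => X j ω) (i + 1 + 1) n *ᵥ D fun j => X j ω) := by
    rw [prodGamma_sub_prodGamma_update α _ (by omega) hin]
    simp only [D, smul_mulVec, mulVec_mulVec, mul_assoc]
  have hD : Continuous D := by
    dsimp only [D]
    fun_prop
  have hDs : DependsOn D ↑({n + 1, i + 1} ∪ Finset.Icc 1 i) := fun x y hxy => by
    have hΓ : prodGamma α x 1 i = prodGamma α y 1 i :=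
      prodGamma_congr α x fun j h1 h2 => hxy j (by simp; omega)
    simp only [D, hxy (n + 1) (by simp), hxy (i + 1) (by simp), hΓ]
  have hDB : ∀ᵐ ω ∂μ, vnorm (D fun j => X j ω) ≤ 2 * c ^ 2 * vnorm v := by
    filter_upwards [hXc (n + 1), hXc (i + 1), ae_vnorm_prodGamma_mulVec_le hα hαc hXc]
      with ω hn hi hΓ
    exact (vnorm_vecMulVec_sub_vecMulVec_mulVec_le hn hi _).trans
      (mul_le_mul_of_nonneg_left (hΓ 1 i v) (by positivity))
  calc _ = α ^ 2 * ∫ ω, vnorm (prodGamma α (fun j => X j ω) (i + 1 + 1) n *ᵥ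
          D fun j => X j ω) ^ 2 ∂μ := by
        simp only [hdiff, vnorm_smul, mul_pow, sq_abs]
        exact integral_const_mul _ _
    _ ≤ α ^ 2 * ((1 - α * a) ^ (n + 1 - (i + 1 + 1)) *
          ((2 * c ^ 2) ^ 2 * ((1 - α * a) ^ i * vnorm v ^ 2))) := by
        refine mul_le_mul_of_nonneg_left ?_ (sq_nonneg α)
        refine (integral_vnorm_prodGamma_mulVec_sq_le hα hαc hαa hmin hXm hindep hXΦ hXc hD hDs
          hDB (by omega) n (by simp; omega)).trans ?_
        exact mul_le_mul_of_nonneg_left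
          (integral_vnorm_vecMulVec_sub_vecMulVec_mulVec_prodGamma_sq_le hα hαc hαa hmin hXm
            hindep hXΦ hXc _ _ i v) (pow_nonneg (by linarith) _)
    _ = (2 * α * c ^ 2) ^ 2 * (1 - α * a) ^ (n - (i + 1) + i) * vnorm v ^ 2 := by
        rw [show n + 1 - (i + 1 + 1) = n - (i + 1) by omega, pow_add]
        ring
    _ = _ := by rw [show n - (i + 1) + i = n - 1 by omega]

end Chain

lemma sqrt_one_sub_pow_le {x : ℝ} (hx : x ≤ 1) (m : ℕ) : √((1 - x) ^ m) ≤ (1 - x / 2) ^ m := by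
  refine Real.sqrt_le_iff.mpr ⟨pow_nonneg (by linarith) m, ?_⟩
  rw [← pow_mul, mul_comm, pow_mul]
  exact pow_le_pow_left₀ (by linarith) (by nlinarith [sq_nonneg x]) m

theorem stmt_16_general {d : ℕ} (c a α : ℝ) (hc : 0 < c)
    (hα : 0 < α) (hα' : α ≤ 1 / c ^ 2)
    (Φ : Matrix (Fin d) (Fin d) ℝ)
    (hmin : ∀ u : Fin d → ℝ, a * vnorm u ^ 2 ≤ u ⬝ᵥ Φ.mulVec u)
    {Ω : Type*} [MeasurableSpace Ω] (μ : Measure Ω) [IsProbabilityMeasure μ]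
    (X : ℕ → Ω → Fin d → ℝ) (hXmeas : ∀ k, Measurable (X k))
    (hindep : iIndepFun X μ)
    (hident : ∀ k, IdentDistrib (X k) (X 1) μ μ)
    (hXbdd : ∀ k, ∀ᵐ ω ∂μ, vnorm (X k ω) ≤ c)
    (hXΦ : ∀ i j, ∫ ω, X 1 ω i * X 1 ω j ∂μ = Φ i j)
    (n i : ℕ) (hi : 1 ≤ i) (hin : i ≤ n) :
    (∀ ω : Ω,
      prodGamma α (fun j => X j ω) 1 n
          - prodGamma α (fun j => if j = i then X (n + 1) ω else X j ω) 1 n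
        = α • (prodGamma α (fun j => X j ω) (i + 1) n
            * (vecMulVec (X (n + 1) ω) (X (n + 1) ω) - vecMulVec (X i ω) (X i ω))
            * prodGamma α (fun j => X j ω) 1 (i - 1)))
      ∧ ∀ v : Fin d → ℝ,
        Real.sqrt (∫ ω, vnorm
            ((prodGamma α (fun j => X j ω) 1 n
              - prodGamma α (fun j => if j = i then X (n + 1) ω else X j ω) 1 n).mulVec
                v) ^ 2 ∂μ)
          ≤ 2 * α * c ^ 2 * (1 - α * a / 2) ^ (n - 1) * vnorm v := by
  refine ⟨fun ω => ?_, fun v => ?_⟩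
  · obtain ⟨i, rfl⟩ : ∃ i', i = i' + 1 := ⟨i - 1, by omega⟩
    exact prodGamma_sub_prodGamma_update α _ (by omega) hin _
  rcases Nat.eq_zero_or_pos d with rfl | hd
  · simp [vnorm]
  have : NeZero d := ⟨hd.ne'⟩
  have hαc : α * c ^ 2 ≤ 1 := by rwa [le_div_iff₀ (by positivity)] at hα'
  have hXkΦ (k : ℕ) (i j : Fin d) : ∫ ω, X k ω i * X k ω j ∂μ = Φ i j :=
    ((hident k).comp (by fun_prop : Measurable fun v : Fin d → ℝ => v i * v j)).integral_eq.trans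
      (hXΦ i j)
  have hαa : α * a ≤ 1 :=
    (mul_le_mul_of_nonneg_left (le_sq_of_ae_vnorm_le (hXbdd 1) hXΦ hmin) hα.le).trans hαc
  calc _ ≤ √((2 * α * c ^ 2) ^ 2 * (1 - α * a) ^ (n - 1) * vnorm v ^ 2) := Real.sqrt_le_sqrt
        (integral_vnorm_prodGamma_sub_prodGamma_update_mulVec_sq_le hα.le hαc hαa hmin hXmeas
          hindep hXkΦ hXbdd hi hin v)
    _ = 2 * α * c ^ 2 * √((1 - α * a) ^ (n - 1)) * vnorm v := by
        rw [Real.sqrt_mul (by positivity), Real.sqrt_mul (by positivity),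
          Real.sqrt_sq (by positivity), Real.sqrt_sq (vnorm_nonneg v)]
    _ ≤ 2 * α * c ^ 2 * (1 - α * a / 2) ^ (n - 1) * vnorm v := by
        gcongr
        · exact vnorm_nonneg v
        · exact sqrt_one_sub_pow_le hαa _

/-- For i.i.d. bounded features `X_1,…,X_n` and an independent copy
`X_i' := X_{n+1}` substituted at index `i`, writing `Γ'_{1:n}` for the product with the
substituted sequence, one has
`Γ_{1:n} − Γ'_{1:n} = αΓ_{i+1:n}(X_i'X_i'ᵀ − X_iX_iᵀ)Γ_{1:i−1}` and
`E[‖(Γ_{1:n} − Γ'_{1:n})v‖²]^{1/2} ≤ 2αc²(1 − αa/2)^{n−1}‖v‖`. -/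
theorem stmt_16 {d : ℕ} (c a α : ℝ) (hc : 0 < c) (ha : 0 < a)
    (hα : 0 < α) (hα' : α ≤ 1 / c ^ 2)
    (Φ : Matrix (Fin d) (Fin d) ℝ) (hΦpd : Φ.PosDef)
    (hmin : ∀ u : Fin d → ℝ, a * vnorm u ^ 2 ≤ u ⬝ᵥ Φ.mulVec u)
    {Ω : Type*} [MeasurableSpace Ω] (μ : Measure Ω) [IsProbabilityMeasure μ]
    (X : ℕ → Ω → Fin d → ℝ) (hXmeas : ∀ k, Measurable (X k))
    (hindep : iIndepFun X μ)
    (hident : ∀ k, IdentDistrib (X k) (X 1) μ μ)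
    (hXbdd : ∀ k, ∀ᵐ ω ∂μ, vnorm (X k ω) ≤ c)
    (hXΦ : ∀ i j, ∫ ω, X 1 ω i * X 1 ω j ∂μ = Φ i j)
    (n i : ℕ) (hi : 1 ≤ i) (hin : i ≤ n) :
    (∀ ω : Ω,
      prodGamma α (fun j => X j ω) 1 n
          - prodGamma α (fun j => if j = i then X (n + 1) ω else X j ω) 1 n
        = α • (prodGamma α (fun j => X j ω) (i + 1) n
            * (vecMulVec (X (n + 1) ω) (X (n + 1) ω) - vecMulVec (X i ω) (X i ω))
            * prodGamma α (fun j => X j ω) 1 (i - 1)))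
      ∧ ∀ v : Fin d → ℝ,
        Real.sqrt (∫ ω, vnorm
            ((prodGamma α (fun j => X j ω) 1 n
              - prodGamma α (fun j => if j = i then X (n + 1) ω else X j ω) 1 n).mulVec
                v) ^ 2 ∂μ)
          ≤ 2 * α * c ^ 2 * (1 - α * a / 2) ^ (n - 1) * vnorm v :=
  stmt_16_general c a α hc hα hα' Φ hmin μ X hXmeas hindep hident hXbdd hXΦ n i hi hin
end
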